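/- An unsatisfiable set F of clauses has an execution of the basic DLL algorithm on (F, ∅) making fewer than s recursive calls if and only if F has a regular tree resolution refutation of size at most s. -/

import Mathlib

open Classical

noncomputable section

abbrev Var := ℕ
abbrev Lit := Var × Bool

def Lit.neg (l : Lit) : Lit := (l.1, !l.2)
def posLit (x : Var) : Lit := (x, true)
def negLit (x : Var) : Lit := (x, false)

abbrev Clause := Finset Lit
abbrev CNF := Set Clause
abbrev Assign := Var → Option Bool

def Assign.set (α : Assign) (x : Var) (b : Bool) : Assign :=
  fun y => if y = x then some b else α y

def emptyAssign : Assign := fun _ => none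

/-- `α` assigns the value false to every literal of `C` (i.e. `C↾α = 0`). -/
def falsifies (α : Assign) (C : Clause) : Prop := ∀ l ∈ C, α l.1 = some (!l.2)

def satLit (α : Assign) (l : Lit) : Prop := α l.1 = some l.2

/-- `F↾α = 0`. -/
def CNFFalse (F : CNF) (α : Assign) : Prop := ∃ C ∈ F, falsifies α C

/-- `F↾α = 1`. -/
def CNFTrue (F : CNF) (α : Assign) : Prop := ∀ C ∈ F, ∃ l ∈ C, satLit α l

def Unsat (F : CNF) : Prop := ¬ ∃ β : Var → Bool, ∀ C ∈ F, ∃ l ∈ C, β l.1 = l.2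

/-- The (w-)resolvent of `C0` and `C1` on the variable `x`. -/
def Resolvent (C0 C1 : Clause) (x : Var) : Clause :=
  C0.erase (posLit x) ∪ C1.erase (negLit x)

/-- A resolution derivation, as a sequence of clauses. -/
def IsResDeriv (F : CNF) (L : List Clause) : Prop :=
  ∀ i (hi : i < L.length),
    L[i] ∈ F ∨ ∃ j k x, ∃ hj : j < L.length, ∃ hk : k < L.length, j < i ∧ k < i ∧
      posLit x ∈ L[j] ∧ negLit x ∈ L[k] ∧ L[i] = Resolvent L[j] L[k] x

/-- A w-resolution derivation: no membership requirements on the resolved variable. -/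
def IsWResDeriv (F : CNF) (L : List Clause) : Prop :=
  ∀ i (hi : i < L.length),
    L[i] ∈ F ∨ ∃ j k x, ∃ hj : j < L.length, ∃ hk : k < L.length, j < i ∧ k < i ∧
      L[i] = Resolvent L[j] L[k] x

/-- A derivation using resolution and the weakening rule. -/
def IsResWeakDeriv (F : CNF) (L : List Clause) : Prop :=
  ∀ i (hi : i < L.length),
    L[i] ∈ F ∨
    (∃ j, ∃ hj : j < L.length, j < i ∧ L[j] ⊆ L[i]) ∨
    ∃ j k x, ∃ hj : j < L.length, ∃ hk : k < L.length, j < i ∧ k < i ∧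
      posLit x ∈ L[j] ∧ negLit x ∈ L[k] ∧ L[i] = Resolvent L[j] L[k] x

/-- Ordered binary resolution trees (nodes carry their clause and resolution variable). -/
inductive RTree where
  | leaf (C : Clause)
  | node (C : Clause) (x : Var) (t0 t1 : RTree)

namespace RTree

def conc : RTree → Clause
  | leaf C => C
  | node C _ _ _ => C

def size : RTree → ℕ
  | leaf _ => 1
  | node _ _ t0 t1 => t0.size + t1.size + 1

def resVars : RTree → Finset Var
  | leaf _ => ∅
  | node _ x t0 t1 => insert x (t0.resVars ∪ t1.resVars)

def allClauses : RTree → Set Clause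
  | leaf C => {C}
  | node C _ t0 t1 => {C} ∪ t0.allClauses ∪ t1.allClauses

def derivedClauses : RTree → Set Clause
  | leaf _ => ∅
  | node C _ t0 t1 => {C} ∪ t0.derivedClauses ∪ t1.derivedClauses

def leafClauses : RTree → Set Clause
  | leaf C => {C}
  | node _ _ t0 t1 => t0.leafClauses ∪ t1.leafClauses

def isLeaf : RTree → Prop
  | leaf _ => True
  | node _ _ _ _ => False

/-- Every internal node has at least one leaf child: input trees. -/
def inputShape : RTree → Prop
  | leaf _ => True
  | node _ _ t0 t1 => (t0.isLeaf ∨ t1.isLeaf) ∧ t0.inputShape ∧ t1.inputShape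

/-- All inferences are proper (ordinary) resolution inferences. -/
def properRes : RTree → Prop
  | leaf _ => True
  | node C x t0 t1 => posLit x ∈ t0.conc ∧ negLit x ∈ t1.conc ∧
      C = Resolvent t0.conc t1.conc x ∧ t0.properRes ∧ t1.properRes

/-- The clauses of the input-derived nodes of a tree (subtrees that are input
resolution proofs). -/
def inputClauses : RTree → Set Clause
  | leaf C => {C}
  | node C x t0 t1 =>
      (if (RTree.node C x t0 t1).inputShape ∧ (RTree.node C x t0 t1).properRes
        then ({C} : Set Clause) else ∅)
      ∪ t0.inputClauses ∪ t1.inputClauses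

/-- Number of non-input-derived nodes. -/
def nonInputCount : RTree → ℕ
  | leaf _ => 0
  | node C x t0 t1 =>
      (if (RTree.node C x t0 t1).inputShape ∧ (RTree.node C x t0 t1).properRes
        then 0 else 1)
      + t0.nonInputCount + t1.nonInputCount

/-- Regularity: no variable is used twice as resolution variable on a path. -/
def regAux : RTree → Set Var → Prop
  | leaf _, _ => True
  | node _ x t0 t1, s => x ∉ s ∧ t0.regAux (insert x s) ∧ t1.regAux (insert x s)

def regular (t : RTree) : Prop := t.regAux ∅

end RTree

/-- An ordinary resolution tree with all leaves labeled by clauses of `F`. -/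
def IsResTreeFrom (F : CNF) : RTree → Prop
  | .leaf C => C ∈ F
  | .node C x t0 t1 => IsResTreeFrom F t0 ∧ IsResTreeFrom F t1 ∧
      posLit x ∈ t0.conc ∧ negLit x ∈ t1.conc ∧ C = Resolvent t0.conc t1.conc x

/-- Resolution tree with input lemmas; `avail` is the set of lemmas available
from earlier (in post-order) input-derived nodes. -/
def IsRTI (F : CNF) : RTree → Set Clause → Prop
  | .leaf C, avail => C ∈ F ∨ C ∈ avail
  | .node C x t0 t1, avail => IsRTI F t0 avail ∧ IsRTI F t1 (avail ∪ t0.inputClauses) ∧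
      posLit x ∈ t0.conc ∧ negLit x ∈ t1.conc ∧ C = Resolvent t0.conc t1.conc x

/-- w-resolution tree with input lemmas. -/
def IsWRTI (F : CNF) : RTree → Set Clause → Prop
  | .leaf C, avail => C ∈ F ∨ C ∈ avail
  | .node C x t0 t1, avail => IsWRTI F t0 avail ∧ IsWRTI F t1 (avail ∪ t0.inputClauses) ∧
      C = Resolvent t0.conc t1.conc x

/-- Resolution tree with (arbitrary earlier) lemmas. -/
def IsRTL (F : CNF) : RTree → Set Clause → Prop
  | .leaf C, avail => C ∈ F ∨ C ∈ avail
  | .node C x t0 t1, avail => IsRTL F t0 avail ∧ IsRTL F t1 (avail ∪ t0.allClauses) ∧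
      posLit x ∈ t0.conc ∧ negLit x ∈ t1.conc ∧ C = Resolvent t0.conc t1.conc x

/-- w-resolution tree with (arbitrary earlier) lemmas. -/
def IsWRTL (F : CNF) : RTree → Set Clause → Prop
  | .leaf C, avail => C ∈ F ∨ C ∈ avail
  | .node C x t0 t1, avail => IsWRTL F t0 avail ∧ IsWRTL F t1 (avail ∪ t0.allClauses) ∧
      C = Resolvent t0.conc t1.conc x

/-- Resolution dags, presented in a topological order; node `n-1` is the conclusion. -/
structure RDag (F : CNF) where
  n : ℕ
  npos : 0 < n
  clause : Fin n → Clause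
  pred : Fin n → Option (Fin n × Fin n × Var)
  topo : ∀ i p, pred i = some p → p.1 < i ∧ p.2.1 < i
  leaf_mem : ∀ i, pred i = none → clause i ∈ F
  res_ok : ∀ i j k x, pred i = some (j, k, x) →
    posLit x ∈ clause j ∧ negLit x ∈ clause k ∧ clause i = Resolvent (clause j) (clause k) x

namespace RDag

variable {F : CNF}

def root (R : RDag F) : Fin R.n := ⟨R.n - 1, Nat.sub_lt R.npos one_pos⟩

def parent (R : RDag F) (j i : Fin R.n) : Prop :=
  ∃ p, R.pred i = some p ∧ (p.1 = j ∨ p.2.1 = j)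

def resVar (R : RDag F) (i : Fin R.n) : Option Var := (R.pred i).map (fun p => p.2.2)

def regular (R : RDag F) : Prop :=
  ∀ i j x, Relation.TransGen R.parent j i → R.resVar i = some x → R.resVar j ≠ some x

/-- `PathLen R i m`: there is a path with `m` edges from some leaf of `R` to `i`. -/
inductive PathLen (R : RDag F) : Fin R.n → ℕ → Prop
  | leaf (i) (h : R.pred i = none) : PathLen R i 0
  | step (i j m) (h : R.parent j i) (hj : PathLen R j m) : PathLen R i (m + 1)

end RDag

/-- w-resolution dags. -/
structure WRDag (F : CNF) where
  n : ℕ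
  npos : 0 < n
  clause : Fin n → Clause
  pred : Fin n → Option (Fin n × Fin n × Var)
  topo : ∀ i p, pred i = some p → p.1 < i ∧ p.2.1 < i
  leaf_mem : ∀ i, pred i = none → clause i ∈ F
  res_ok : ∀ i j k x, pred i = some (j, k, x) →
    clause i = Resolvent (clause j) (clause k) x

namespace WRDag

variable {F : CNF}

def root (R : WRDag F) : Fin R.n := ⟨R.n - 1, Nat.sub_lt R.npos one_pos⟩

def parent (R : WRDag F) (j i : Fin R.n) : Prop :=
  ∃ p, R.pred i = some p ∧ (p.1 = j ∨ p.2.1 = j)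

def resVar (R : WRDag F) (i : Fin R.n) : Option Var := (R.pred i).map (fun p => p.2.2)

def regular (R : WRDag F) : Prop :=
  ∀ i j x, Relation.TransGen R.parent j i → R.resVar i = some x → R.resVar j ≠ some x

def IsRefutation (R : WRDag F) : Prop := R.clause R.root = ∅

/-- `PathLits R v S`: there is a path from `v` to the root of `R` whose set of
edge labels is `S` (the edge from the first premise is labeled `¬x`, from the
second premise `x`). -/
inductive PathLits (R : WRDag F) : Fin R.n → Set Lit → Prop
  | root : PathLits R R.root ∅
  | left (i j k x S) (h : R.pred i = some (j, k, x)) (hi : PathLits R i S) :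
      PathLits R j (insert (negLit x) S)
  | right (i j k x S) (h : R.pred i = some (j, k, x)) (hi : PathLits R i S) :
      PathLits R k (insert (posLit x) S)

end WRDag
/-- A conflict graph for `F` under `α`.  The special node `□` is left implicit:
`x` is the conflict variable, and the edges from `x` and `¬x` to `□` are not
represented. -/
structure ConflictGraph (F : CNF) (α : Assign) where
  V : Finset Lit
  E : Finset (Lit × Lit)
  x : Var
  pos_mem : posLit x ∈ V
  neg_mem : negLit x ∈ V
  uniq : ∀ y, posLit y ∈ V → negLit y ∈ V → y = x
  edges_mem : ∀ e ∈ E, e.1 ∈ V ∧ e.2 ∈ V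
  acyclic : ∃ rank : Lit → ℕ, ∀ e ∈ E, rank e.1 < rank e.2
  leaf_true : ∀ l ∈ V, (∀ e ∈ E, e.2 ≠ l) → α l.1 = some l.2
  internal_clause : ∀ l ∈ V, (∃ e ∈ E, e.2 = l) →
      insert l ((V.filter (fun p => (p, l) ∈ E)).image Lit.neg) ∈ F
  sink : ∀ l ∈ V, (∃ e ∈ E, e.1 = l) ∨ l = posLit x ∨ l = negLit x

namespace ConflictGraph

variable {F : CNF} {α : Assign}

def leaves (G : ConflictGraph F α) : Finset Lit :=
  G.V.filter (fun l => ∀ e ∈ G.E, e.2 ≠ l)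

/-- The conflict clause: negations of the leaf literals. -/
def conflictClause (G : ConflictGraph F α) : Clause := G.leaves.image Lit.neg

def Reach (G : ConflictGraph F α) (a b : Lit) : Prop :=
  Relation.ReflTransGen (fun u v => (u, v) ∈ G.E) a b

/-- The induced clause of a literal `l`. -/
def inducedClause (G : ConflictGraph F α) (l : Lit) : Clause :=
  insert l ((G.leaves.filter (fun p => G.Reach p l)).image Lit.neg)

end ConflictGraph

/-- `H` is a subconflict graph of `G`. -/
def Subconflict {F : CNF} {α : Assign} (H G : ConflictGraph F α) : Prop :=
  H.V ⊆ G.V ∧ H.E ⊆ G.E ∧ H.x = G.x ∧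
  ∀ l ∈ H.V, (∃ e ∈ H.E, e.2 = l) → ∀ e ∈ G.E, e.2 = l → e ∈ H.E

/-- `H` is a proper subconflict graph of `G`: additionally, no path in `G` runs
from a non-leaf vertex of `H` to a leaf of `H`. -/
def ProperSub {F : CNF} {α : Assign} (H G : ConflictGraph F α) : Prop :=
  Subconflict H G ∧
  ∀ l ∈ H.V, (∃ e ∈ H.E, e.2 = l) → ∀ p ∈ H.leaves, ¬ G.Reach l p

def StrictSub {F : CNF} {α : Assign} (H G : ConflictGraph F α) : Prop :=
  Subconflict H G ∧ (H.V ≠ G.V ∨ H.E ≠ G.E)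

/-- A series-parallel decomposition of a conflict graph `G`:
`H i 0 = H_i` for `i ≤ k` and `H i j = H_{i,j}` for `j ≤ m i`. -/
structure SPDecomp {F : CNF} {α : Assign} (G : ConflictGraph F α) where
  k : ℕ
  hk : 1 ≤ k
  m : ℕ → ℕ
  hm : ∀ i < k, 1 ≤ m i
  H : ℕ → ℕ → ConflictGraph F α
  base_V : (H 0 0).V = {posLit G.x, negLit G.x}
  base_E : (H 0 0).E = ∅
  chain : ∀ i < k, ∀ j < m i, StrictSub (H i j) (H i (j + 1))
  proper : ∀ i < k, ∀ j ≤ m i, ProperSub (H i j) G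
  link : ∀ i, i + 1 < k → H i (m i) = H (i + 1) 0
  top : H (k - 1) (m (k - 1)) = G

/-- The learnable clauses of a series-parallel decomposition. -/
def SPDecomp.learnable {F : CNF} {α : Assign} {G : ConflictGraph F α}
    (D : SPDecomp G) : Set Clause :=
  {C | ∃ j, 1 ≤ j ∧ j ≤ D.m 0 ∧ C = (D.H 0 j).conflictClause} ∪
  {C | ∃ i j l, 0 < i ∧ i < D.k ∧ 1 ≤ j ∧ j ≤ D.m i ∧
      l ∈ (D.H i 0).leaves ∧ l ∉ (D.H i j).leaves ∧
      C = (D.H i j).inducedClause l}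

def SPDecomp.isSeries {F : CNF} {α : Assign} {G : ConflictGraph F α}
    (D : SPDecomp G) : Prop := D.k = 1

/-- Executions of the basic DLL algorithm returning UNSAT;
the `ℕ` counts the recursive calls made. -/
inductive DLLUnsat (F : CNF) : Assign → ℕ → Prop
  | conflict (α) (h : CNFFalse F α) : DLLUnsat F α 0
  | branch (α) (x : Var) (ε : Bool) (s0 s1 : ℕ)
      (hnot0 : ¬ CNFFalse F α) (hnot1 : ¬ CNFTrue F α) (hx : α x = none)
      (h0 : DLLUnsat F (α.set x ε) s0) (h1 : DLLUnsat F (α.set x (!ε)) s1) :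
      DLLUnsat F α (s0 + s1 + 2)

/-- Executions of the (non-greedy) DLL-L-UP algorithm returning UNSAT:
`DLLLUP F α s F'` means the call on `(F, α)` returns `(F', UNSAT)` after `s`
recursive calls. -/
inductive DLLLUP : CNF → Assign → ℕ → CNF → Prop
  | conflict (F : CNF) (α : Assign) (G : ConflictGraph F α) (D : SPDecomp G)
      (S : Set Clause) (hS : S ⊆ D.learnable) : DLLLUP F α 0 (F ∪ S)
  | branch (F : CNF) (α : Assign) (x : Var) (ε : Bool) (s0 s1 : ℕ) (F1 F2 : CNF)
      (hx : α x = none)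
      (h0 : DLLLUP F (α.set x ε) s0 F1) (h1 : DLLLUP F1 (α.set x (!ε)) s1 F2) :
      DLLLUP F α (s0 + s1 + 2) F2

/-- Executions of DLL-Learn returning UNSAT: `DLLLearn F α s F' C` means the
call on `(F, α)` returns `(F', UNSAT)` with tagged clause `C` after `s`
recursive calls. -/
inductive DLLLearn : CNF → Assign → ℕ → CNF → Clause → Prop
  | base (F : CNF) (α : Assign) (C : Clause) (hC : C ∈ F) (hf : falsifies α C) :
      DLLLearn F α 0 F C
  | branch (F : CNF) (α : Assign) (x : Var) (ε : Bool) (s0 s1 : ℕ)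
      (F1 F2 : CNF) (C0 C1 : Clause) (hx : α x = none)
      (h0 : DLLLearn F (α.set x ε) s0 F1 C0)
      (h1 : DLLLearn F1 (α.set x (!ε)) s1 F2 C1) :
      DLLLearn F α (s0 + s1 + 2)
        (F2 ∪ {C0.erase (x, !ε) ∪ C1.erase (x, ε)})
        (C0.erase (x, !ε) ∪ C1.erase (x, ε))

/-- Trees of resolution and weakening inferences. -/
inductive WTree where
  | leaf (C : Clause)
  | res (C : Clause) (x : Var) (t0 t1 : WTree)
  | weak (C : Clause) (t : WTree)

namespace WTree

def conc : WTree → Clause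
  | leaf C => C
  | res C _ _ _ => C
  | weak C _ => C

def size : WTree → ℕ
  | leaf _ => 1
  | res _ _ t0 t1 => t0.size + t1.size + 1
  | weak _ t => t.size + 1

def allClauses : WTree → Set Clause
  | leaf C => {C}
  | res C _ t0 t1 => {C} ∪ t0.allClauses ∪ t1.allClauses
  | weak C t => {C} ∪ t.allClauses

def leafClauses : WTree → Set Clause
  | leaf C => {C}
  | res _ _ t0 t1 => t0.leafClauses ∪ t1.leafClauses
  | weak _ t => t.leafClauses

end WTree

/-- Resolution trees with lemmas and weakening, all lemmas of size `≤ k`. -/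
def IsRTLW (F : CNF) (k : ℕ) : WTree → Set Clause → Prop
  | .leaf C, avail => C ∈ F ∨ (C ∈ avail ∧ C.card ≤ k)
  | .res C x t0 t1, avail => IsRTLW F k t0 avail ∧ IsRTLW F k t1 (avail ∪ t0.allClauses) ∧
      posLit x ∈ t0.conc ∧ negLit x ∈ t1.conc ∧ C = Resolvent t0.conc t1.conc x
  | .weak C t, avail => IsRTLW F k t avail ∧ t.conc ⊆ C

def phpVar (n i j : ℕ) : Var := i * n + j

/-- The clauses of the functional pigeonhole principle `FPHP_n`. -/
def FPHP (n : ℕ) : CNF :=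
  {C | ∃ i, 1 ≤ i ∧ i ≤ n + 1 ∧
      C = (Finset.Icc 1 n).image (fun j => posLit (phpVar n i j))} ∪
  {C | ∃ i j k, 1 ≤ i ∧ i < j ∧ j ≤ n + 1 ∧ 1 ≤ k ∧ k ≤ n ∧
      C = {negLit (phpVar n i k), negLit (phpVar n j k)}} ∪
  {C | ∃ i j k, 1 ≤ i ∧ i ≤ n + 1 ∧ 1 ≤ j ∧ j < k ∧ k ≤ n ∧
      C = {negLit (phpVar n i j), negLit (phpVar n i k)}}

/-- The variable extension `VE(F)` with extension variables `q` and `P`. -/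
def VE (F : CNF) (q : Var) (P : Finset Var) : CNF :=
  F ∪ {D | ∃ C ∈ F, ∃ l ∈ C, D = {posLit q, Lit.neg l}} ∪ {P.image posLit}

/-!
A run of the basic DLL algorithm and a regular tree refutation are the same tree read in
opposite directions. At a branching on an unassigned variable `x`, clauses falsified by
`α[x ↦ 0]` and by `α[x ↦ 1]` resolve on `x` to a clause falsified by `α`; if one of them does
not mention `x` it is already falsified by `α` and the other branch is dropped, so the tree only
shrinks. Conversely a resolution step on `x` below a clause falsified by `α` tells DLL to branch
on `x`, which is unassigned by regularity. A run with `s` recursive calls has `s + 1` nodes.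
-/

namespace Assign

def dom (α : Assign) : Set Var := {x | α x ≠ none}

@[simp]
lemma set_apply_self (α : Assign) (x : Var) (b : Bool) : α.set x b x = some b := by
  simp [Assign.set]

@[simp]
lemma set_apply_of_ne (α : Assign) {x y : Var} (b : Bool) (h : y ≠ x) : α.set x b y = α y := by
  simp [Assign.set, h]

@[simp]
lemma dom_set (α : Assign) (x : Var) (b : Bool) : (α.set x b).dom = insert x α.dom := by
  ext y
  by_cases h : y = x <;> simp [dom, h]

end Assign

@[simp]
lemma dom_emptyAssign : Assign.dom emptyAssign = ∅ := by
  simp [Assign.dom, emptyAssign]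

section Falsifies

variable {α : Assign} {C : Clause}

lemma falsifies_emptyAssign_iff : falsifies emptyAssign C ↔ C = ∅ := by
  simp [falsifies, emptyAssign, Finset.eq_empty_iff_forall_notMem]

lemma falsifies_union {D : Clause} : falsifies α (C ∪ D) ↔ falsifies α C ∧ falsifies α D := by
  simp only [falsifies, Finset.mem_union, or_imp, forall_and]

lemma falsifies_set_iff {x : Var} (hx : α x = none) (b : Bool) :
    falsifies (α.set x b) C ↔ falsifies α (C.erase (x, !b)) := by
  constructor
  · intro h l hl
    obtain ⟨hne, hlC⟩ := Finset.mem_erase.mp hl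
    have hlx : l.1 ≠ x := by
      intro hlx
      have hval := h l hlC
      rw [hlx, Assign.set_apply_self, Option.some_inj] at hval
      exact hne (Prod.ext hlx (by rw [hval, Bool.not_not]))
    simpa [hlx] using h l hlC
  · intro h l hlC
    by_cases hl : l = (x, !b)
    · simp [hl]
    · have hval := h l (Finset.mem_erase.mpr ⟨hl, hlC⟩)
      have hlx : l.1 ≠ x := by rintro rfl; simp [hx] at hval
      simpa [hlx] using hval

lemma falsifies_of_falsifies_set {x : Var} {b : Bool} (hx : α x = none)
    (h : falsifies (α.set x b) C) (hC : (x, !b) ∉ C) : falsifies α C := by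
  rwa [falsifies_set_iff hx, Finset.erase_eq_of_notMem hC] at h

lemma falsifies_resolvent_iff {C₀ C₁ : Clause} {x : Var} (hx : α x = none) :
    falsifies α (Resolvent C₀ C₁ x) ↔
      falsifies (α.set x false) C₀ ∧ falsifies (α.set x true) C₁ := by
  rw [Resolvent, falsifies_union, falsifies_set_iff hx, falsifies_set_iff hx]
  rfl

end Falsifies

lemma not_cnfTrue_of_unsat {F : CNF} (hU : Unsat F) (α : Assign) : ¬ CNFTrue F α := by
  intro h
  refine hU ⟨fun v => (α v).getD true, fun C hC => ?_⟩
  obtain ⟨l, hl, hsat⟩ := h C hC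
  exact ⟨l, hl, by simp [satLit] at hsat; simp [hsat]⟩

lemma RTree.regAux_anti (t : RTree) {s s' : Set Var} (hss : s ⊆ s') (h : t.regAux s') :
    t.regAux s := by
  induction t generalizing s s' with
  | leaf C => trivial
  | node C x t₀ t₁ ih₀ ih₁ =>
    exact ⟨fun hx => h.1 (hss hx), ih₀ (Set.insert_subset_insert hss) h.2.1,
      ih₁ (Set.insert_subset_insert hss) h.2.2⟩

/-- `t` is a regular tree resolution refutation of the restriction `F↾α`. -/
def IsRegularRefutation (F : CNF) (α : Assign) (t : RTree) : Prop :=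
  IsResTreeFrom F t ∧ falsifies α t.conc ∧ t.regAux α.dom

lemma isRegularRefutation_emptyAssign_iff {F : CNF} {t : RTree} :
    IsRegularRefutation F emptyAssign t ↔ IsResTreeFrom F t ∧ t.regular ∧ t.conc = ∅ := by
  simp only [IsRegularRefutation, falsifies_emptyAssign_iff, dom_emptyAssign, RTree.regular]
  tauto

section Branching

variable {F : CNF} {α : Assign} {x : Var}

lemma IsRegularRefutation.of_set {b : Bool} {t : RTree} (hx : α x = none)
    (ht : IsRegularRefutation F (α.set x b) t) (hC : (x, !b) ∉ t.conc) :
    IsRegularRefutation F α t := by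
  obtain ⟨htF, hf, hreg⟩ := ht
  rw [Assign.dom_set] at hreg
  exact ⟨htF, falsifies_of_falsifies_set hx hf hC, t.regAux_anti (Set.subset_insert _ _) hreg⟩

lemma IsRegularRefutation.node {t₀ t₁ : RTree} (hx : α x = none)
    (h₀ : IsRegularRefutation F (α.set x false) t₀) (h₁ : IsRegularRefutation F (α.set x true) t₁)
    (hpos : posLit x ∈ t₀.conc) (hneg : negLit x ∈ t₁.conc) :
    IsRegularRefutation F α (.node (Resolvent t₀.conc t₁.conc x) x t₀ t₁) := by
  obtain ⟨h₀F, h₀f, h₀reg⟩ := h₀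
  obtain ⟨h₁F, h₁f, h₁reg⟩ := h₁
  rw [Assign.dom_set] at h₀reg h₁reg
  exact ⟨⟨h₀F, h₁F, hpos, hneg, rfl⟩, (falsifies_resolvent_iff hx).mpr ⟨h₀f, h₁f⟩,
    by simpa [Assign.dom] using hx, h₀reg, h₁reg⟩

lemma IsRegularRefutation.exists_of_branches {t₀ t₁ : RTree} (hx : α x = none)
    (h₀ : IsRegularRefutation F (α.set x false) t₀) (h₁ : IsRegularRefutation F (α.set x true) t₁) :
    ∃ t, IsRegularRefutation F α t ∧ t.size ≤ t₀.size + t₁.size + 1 := by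
  by_cases hpos : posLit x ∈ t₀.conc
  · by_cases hneg : negLit x ∈ t₁.conc
    · exact ⟨_, h₀.node hx h₁ hpos hneg, le_rfl⟩
    · exact ⟨t₁, h₁.of_set hx hneg, by omega⟩
  · exact ⟨t₀, h₀.of_set hx hpos, by omega⟩

end Branching

theorem DLLUnsat.exists_isRegularRefutation {F : CNF} {α : Assign} {s : ℕ}
    (h : DLLUnsat F α s) : ∃ t, IsRegularRefutation F α t ∧ t.size ≤ s + 1 := by
  induction h with
  | conflict α hF =>
    obtain ⟨C, hC, hf⟩ := hF
    exact ⟨.leaf C, ⟨hC, hf, trivial⟩, le_rfl⟩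
  | branch α x ε s₀ s₁ _ _ hx _ _ ih₀ ih₁ =>
    obtain ⟨t₀, ht₀, hs₀⟩ := ih₀
    obtain ⟨t₁, ht₁, hs₁⟩ := ih₁
    obtain ⟨t, ht, hs⟩ : ∃ t, IsRegularRefutation F α t ∧ t.size ≤ t₀.size + t₁.size + 1 := by
      cases ε
      · exact IsRegularRefutation.exists_of_branches hx ht₀ ht₁
      · simpa only [add_comm t₀.size] using IsRegularRefutation.exists_of_branches hx ht₁ ht₀
    exact ⟨t, ht, by omega⟩

theorem IsRegularRefutation.exists_dllUnsat {F : CNF} (hU : Unsat F) {α : Assign} {t : RTree}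
    (ht : IsRegularRefutation F α t) : ∃ s < t.size, DLLUnsat F α s := by
  induction t generalizing α with
  | leaf C => exact ⟨0, by simp [RTree.size], .conflict α ⟨C, ht.1, ht.2.1⟩⟩
  | node C x t₀ t₁ ih₀ ih₁ =>
    by_cases hF : CNFFalse F α
    · exact ⟨0, by simp [RTree.size], .conflict α hF⟩
    obtain ⟨⟨h₀F, h₁F, -, -, rfl⟩, hf, hxα, h₀reg, h₁reg⟩ := ht
    have hx : α x = none := by simpa [Assign.dom] using hxα
    obtain ⟨h₀f, h₁f⟩ := (falsifies_resolvent_iff hx).mp hf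
    obtain ⟨s₀, hs₀, hd₀⟩ := ih₀ ⟨h₀F, h₀f, by rwa [Assign.dom_set]⟩
    obtain ⟨s₁, hs₁, hd₁⟩ := ih₁ ⟨h₁F, h₁f, by rwa [Assign.dom_set]⟩
    exact ⟨s₀ + s₁ + 2, by simp only [RTree.size]; omega,
      .branch α x false s₀ s₁ hF (not_cnfTrue_of_unsat hU α) hx hd₀ hd₁⟩

/-- Thm. 4.3: `F` has a DLL execution with fewer than `s` recursive calls iff
`F` has a regular tree resolution refutation of size `≤ s`. -/
theorem stmt9 (F : CNF) (hU : Unsat F) (s : ℕ) :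
    (∃ s' < s, DLLUnsat F emptyAssign s') ↔
    (∃ t : RTree, IsResTreeFrom F t ∧ t.regular ∧ t.conc = ∅ ∧ t.size ≤ s) := by
  constructor
  · rintro ⟨s', hs', hd⟩
    obtain ⟨t, ht, hsize⟩ := hd.exists_isRegularRefutation
    obtain ⟨htF, hreg, hconc⟩ := isRegularRefutation_emptyAssign_iff.mp ht
    exact ⟨t, htF, hreg, hconc, by omega⟩
  · rintro ⟨t, htF, hreg, hconc, hsize⟩
    obtain ⟨s', hs', hd⟩ :=
      (isRegularRefutation_emptyAssign_iff.mpr ⟨htF, hreg, hconc⟩).exists_dllUnsat hU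
    exact ⟨s', by omega, hd⟩
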